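/- For every n ≥ 4, the zero loci of the annihilator ideals in ℂ^{C(n,2)} satisfy Z(Ann_S(K_n)) ⊆ Z(Ann_S(𝔅_n)) = Z(Ann_S(𝔅_n')), where for an ideal J ⊆ S, Z(J) = { p ∈ ℂ^{C(n,2)} : f(p) = 0 for all f ∈ J } (points of ℂ^{C(n,2)} indexed by the pairs (i,j), 1 ≤ j < i ≤ n). -/

import Mathlib

/-- Index set for the variables `x_{ij}` (`1 ≤ j < i ≤ n`, `0`-indexed). -/
abbrev PIdx (n : ℕ) := { p : Fin n × Fin n // p.2 < p.1 }

/-- The polynomial ring `S = ℂ[x_{ij} : j < i]`. -/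
abbrev Sn (n : ℕ) := MvPolynomial (PIdx n) ℂ

/-- Index set for the basis `r_{ijk}` (`k < j < i`). -/
abbrev TIdx (n : ℕ) := { t : Fin n × Fin n × Fin n // t.2.2 < t.2.1 ∧ t.2.1 < t.1 }

/-- The free `S`-module `F` with basis `{r_{ijk} : k < j < i}`. -/
abbrev Fn (n : ℕ) := TIdx n → Sn n

/-- The variable `x_{ij}` (for `j < i`). -/
noncomputable def Xv (n : ℕ) (i j : Fin n) (h : j < i) : Sn n := MvPolynomial.X ⟨(i, j), h⟩

/-- The basis element `r_{ijk}` of `F` (for `k < j < i`). -/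
noncomputable def rGen (n : ℕ) (i j k : Fin n) (h1 : k < j) (h2 : j < i) : Fn n :=
  Pi.single ⟨(i, j, k), h1, h2⟩ 1

/-- The generating set `B = ∪ B_{ijk}` of relations (`g₁,…,g₄, h₁,…,h₈` of the paper):
for each `k < j < i` and admissible `l₁ < k < l₂ < j < l₃ < i < l₄` and pairs `t < s`
with `{s,t} ∩ {i,j,k} = ∅`. -/
noncomputable def BSet (n : ℕ) : Set (Fn n) :=
  { w | ∃ (i j k : Fin n) (hkj : k < j) (hji : j < i),
    -- g₁
    (∃ (l : Fin n) (h1 : k < l) (h2 : l < j),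
      w = (-Xv n j k hkj - Xv n l k h1) • rGen n i j l h2 hji
          + Xv n j l h2 • rGen n i j k hkj hji) ∨
    -- g₂
    (∃ (l : Fin n) (_h1 : k < l) (h2 : l < j),
      w = Xv n j k hkj • rGen n i j l h2 hji
          + Xv n i l (h2.trans hji) • rGen n i j k hkj hji) ∨
    -- g₃
    (∃ (l : Fin n) (h1 : j < l) (h2 : l < i),
      w = -(Xv n j k hkj • rGen n i l j h1 h2)
          + Xv n i l h2 • rGen n i j k hkj hji) ∨
    -- g₄
    (∃ (l : Fin n) (h1 : i < l),
      w = Xv n j k hkj • rGen n l i j hji h1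
          + Xv n l i h1 • rGen n i j k hkj hji) ∨
    -- h₁
    (∃ (l : Fin n) (h1 : l < k),
      w = (Xv n i l (h1.trans (hkj.trans hji)) + Xv n j l (h1.trans hkj) + Xv n k l h1) •
          rGen n i j k hkj hji) ∨
    -- h₂
    (w = (Xv n i k (hkj.trans hji) + Xv n j k hkj) • rGen n i j k hkj hji) ∨
    -- h₃
    (∃ (l : Fin n) (h1 : k < l) (_h2 : l < j), w = Xv n l k h1 • rGen n i j k hkj hji) ∨
    -- h₄
    (∃ (l : Fin n) (h1 : j < l) (_h2 : l < i),
      w = Xv n l k (hkj.trans h1) • rGen n i j k hkj hji) ∨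
    -- h₅
    (∃ (l : Fin n) (h1 : j < l) (_h2 : l < i), w = Xv n l j h1 • rGen n i j k hkj hji) ∨
    -- h₆
    (∃ (l : Fin n) (h1 : i < l),
      w = Xv n l k ((hkj.trans hji).trans h1) • rGen n i j k hkj hji) ∨
    -- h₇
    (∃ (l : Fin n) (h1 : i < l), w = Xv n l j (hji.trans h1) • rGen n i j k hkj hji) ∨
    -- h₈
    (∃ (s t : Fin n) (h : t < s), s ≠ i ∧ s ≠ j ∧ s ≠ k ∧ t ≠ i ∧ t ≠ j ∧ t ≠ k ∧
      w = Xv n s t h • rGen n i j k hkj hji) }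

/-- The `S`-submodule of `F` spanned by `B`. -/
noncomputable def spanB (n : ℕ) : Submodule (Sn n) (Fn n) := Submodule.span (Sn n) (BSet n)

/-- The infinitesimal Alexander invariant `𝔅ₙ = F / span_S(B)` of `PΣₙ⁺`. -/
abbrev Bn (n : ℕ) := Fn n ⧸ spanB n

/-- The extra monomial generators `E = { x_{kp}·r_{ijk} : p < k < j < i }`. -/
noncomputable def ESet (n : ℕ) : Set (Fn n) :=
  { w | ∃ (i j k : Fin n) (hkj : k < j) (hji : j < i) (p : Fin n) (hp : p < k),
      w = Xv n k p hp • rGen n i j k hkj hji }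

/-- The `S`-submodule of `F` spanned by `B ∪ E`. -/
noncomputable def spanB' (n : ℕ) : Submodule (Sn n) (Fn n) :=
  Submodule.span (Sn n) (BSet n ∪ ESet n)

/-- The quotient module `𝔅ₙ' = F / span_S(B ∪ E)`. -/
abbrev Bn' (n : ℕ) := Fn n ⧸ spanB' n

/-- Index set for the basis `e_{ijkl}` (`l < k < j < i`). -/
abbrev QIdx (n : ℕ) :=
  { q : Fin n × Fin n × Fin n × Fin n //
      q.2.2.2 < q.2.2.1 ∧ q.2.2.1 < q.2.1 ∧ q.2.1 < q.1 }

/-- The free `S`-module `F'` with basis `{e_{ijkl} : l < k < j < i}`. -/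
abbrev F'n (n : ℕ) := QIdx n → Sn n

/-- The basis element `e_{ijkl}` of `F'`. -/
noncomputable def eGen (n : ℕ) (i j k l : Fin n) (h1 : l < k) (h2 : k < j) (h3 : j < i) :
    F'n n :=
  Pi.single ⟨(i, j, k, l), h1, h2, h3⟩ 1

/-- The generating set `{ x_{st}·e_{ijkl} : t < s, (s,t) ≠ (i,j) }`. -/
noncomputable def JSet (n : ℕ) : Set (F'n n) :=
  { w | ∃ (i j k l : Fin n) (h1 : l < k) (h2 : k < j) (h3 : j < i)
      (s t : Fin n) (hts : t < s), (s, t) ≠ (i, j) ∧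
      w = Xv n s t hts • eGen n i j k l h1 h2 h3 }

/-- The `S`-submodule of `F'` spanned by the set above. -/
noncomputable def spanJ (n : ℕ) : Submodule (Sn n) (F'n n) := Submodule.span (Sn n) (JSet n)

/-- The module `Kₙ = F' / span_S{x_{st}·e_{ijkl} : (s,t) ≠ (i,j)}`. -/
abbrev Kn (n : ℕ) := F'n n ⧸ spanJ n

/-- The zero locus in `ℂ^{C(n,2)}` (points indexed by the pairs `(i,j)`, `j < i`)
of an ideal `J ⊆ S`. -/
def zeroLocus (n : ℕ) (J : Ideal (Sn n)) : Set (PIdx n → ℂ) :=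
  { p | ∀ f ∈ J, MvPolynomial.eval p f = 0 }

/-!
Indices are `0`-based: the paper's `x_{i1}` is `x_{i0}` here.

Let `p` have at most one nonzero coordinate, at a pair `(s, t)` with `t ≠ 0`. In the
`r_{st0}`-component of every element of `B ∪ E` only variables other than `x_{st}` occur, so
`f • r_{st0} ∈ span (B ∪ E)` forces `f(p) = 0`; hence `p ∈ Z(Ann 𝔅ₙ')`. Every point of
`Z(Ann Kₙ)` has this shape, since `Ann Kₙ` contains `x_a x_b` for `a ≠ b` and `x_{st}` for
`t < 2`.

`Ann 𝔅ₙ ⊆ Ann 𝔅ₙ'` gives one inclusion of the equality. For the other,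
`x_{uv} x_{kq} r_{ijk} ∈ span B` whenever `(u, v) ≠ (i, j)`: one of `g₁ + g₂`, `g₃`, `g₄`
rewrites `x_{kq} r_{ijk}` modulo `B` as a multiple of `r_{ijq}`, `r_{ikq}` or `r_{jkq}`, which
`x_{uv}` kills by one of `h₃, …, h₈`. So `x_a x_b • Ann 𝔅ₙ' ⊆ Ann 𝔅ₙ` for `a ≠ b` and
`x_{s0} • Ann 𝔅ₙ' ⊆ Ann 𝔅ₙ`; a point of `Z(Ann 𝔅ₙ)` at which some `f ∈ Ann 𝔅ₙ'` does not
vanish therefore has the shape above, a contradiction.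
-/

open MvPolynomial (X eval)

lemma SModEq.smul_mem_of_smul_mem {R M : Type*} [CommRing R] [AddCommGroup M] [Module R M]
    {N : Submodule R M} {w r : M} {a x : R} (h : w ≡ a • r [SMOD N]) (hr : x • r ∈ N) :
    x • w ∈ N := by
  rw [← SModEq.zero]
  calc x • w ≡ x • a • r [SMOD N] := h.smul x
    _ = a • x • r := smul_comm x a r
    _ ≡ a • 0 [SMOD N] := (SModEq.zero.2 hr).smul a
    _ = 0 := smul_zero a

lemma Submodule.mem_annihilator_quotient_iff {R M : Type*} [CommRing R] [AddCommGroup M]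
    [Module R M] {N : Submodule R M} {r : R} :
    r ∈ Module.annihilator R (M ⧸ N) ↔ ∀ v : M, r • v ∈ N := by
  simp [Submodule.annihilator_quotient, Submodule.mem_colon]

lemma Module.Basis.mem_annihilator_quotient_iff {ι R M : Type*} [CommRing R] [AddCommGroup M]
    [Module R M] (b : Module.Basis ι R M) {N : Submodule R M} {r : R} :
    r ∈ Module.annihilator R (M ⧸ N) ↔ ∀ i, r • b i ∈ N := by
  rw [Submodule.annihilator_quotient, ← Submodule.top_coe (R := R), ← b.span_eq,
    Submodule.colon_span, Submodule.mem_colon, Set.forall_mem_range]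

variable {n : ℕ}

lemma zeroLocus_anti_mono {J J' : Ideal (Sn n)} (h : J ≤ J') : zeroLocus n J' ⊆ zeroLocus n J :=
  fun _ hp f hf => hp f (h hf)

section

variable (i j k l : Fin n) (hkj : k < j) (hji : j < i)

lemma g1_mem_spanB (h1 : k < l) (h2 : l < j) :
    (-Xv n j k hkj - Xv n l k h1) • rGen n i j l h2 hji
      + Xv n j l h2 • rGen n i j k hkj hji ∈ spanB n :=
  Submodule.subset_span ⟨i, j, k, hkj, hji, Or.inl ⟨l, h1, h2, rfl⟩⟩

lemma g2_mem_spanB (h1 : k < l) (h2 : l < j) :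
    Xv n j k hkj • rGen n i j l h2 hji
      + Xv n i l (h2.trans hji) • rGen n i j k hkj hji ∈ spanB n :=
  Submodule.subset_span ⟨i, j, k, hkj, hji, .inr <| .inl ⟨l, h1, h2, rfl⟩⟩

lemma g3_mem_spanB (h1 : j < l) (h2 : l < i) :
    -(Xv n j k hkj • rGen n i l j h1 h2) + Xv n i l h2 • rGen n i j k hkj hji ∈ spanB n :=
  Submodule.subset_span ⟨i, j, k, hkj, hji, .inr <| .inr <| .inl ⟨l, h1, h2, rfl⟩⟩

lemma g4_mem_spanB (h1 : i < l) :
    Xv n j k hkj • rGen n l i j hji h1 + Xv n l i h1 • rGen n i j k hkj hji ∈ spanB n :=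
  Submodule.subset_span ⟨i, j, k, hkj, hji, .inr <| .inr <| .inr <| .inl ⟨l, h1, rfl⟩⟩

lemma h3_mem_spanB (h1 : k < l) (h2 : l < j) : Xv n l k h1 • rGen n i j k hkj hji ∈ spanB n :=
  Submodule.subset_span ⟨i, j, k, hkj, hji,
    .inr <| .inr <| .inr <| .inr <| .inr <| .inr <| .inl ⟨l, h1, h2, rfl⟩⟩

lemma h4_mem_spanB (h1 : j < l) (h2 : l < i) :
    Xv n l k (hkj.trans h1) • rGen n i j k hkj hji ∈ spanB n :=
  Submodule.subset_span ⟨i, j, k, hkj, hji,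
    .inr <| .inr <| .inr <| .inr <| .inr <| .inr <| .inr <| .inl ⟨l, h1, h2, rfl⟩⟩

lemma h5_mem_spanB (h1 : j < l) (h2 : l < i) : Xv n l j h1 • rGen n i j k hkj hji ∈ spanB n :=
  Submodule.subset_span ⟨i, j, k, hkj, hji,
    .inr <| .inr <| .inr <| .inr <| .inr <| .inr <| .inr <| .inr <| .inl ⟨l, h1, h2, rfl⟩⟩

lemma h6_mem_spanB (h1 : i < l) :
    Xv n l k ((hkj.trans hji).trans h1) • rGen n i j k hkj hji ∈ spanB n :=
  Submodule.subset_span ⟨i, j, k, hkj, hji,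
    .inr <| .inr <| .inr <| .inr <| .inr <| .inr <| .inr <| .inr <| .inr <| .inl ⟨l, h1, rfl⟩⟩

lemma h7_mem_spanB (h1 : i < l) : Xv n l j (hji.trans h1) • rGen n i j k hkj hji ∈ spanB n :=
  Submodule.subset_span ⟨i, j, k, hkj, hji,
    .inr <| .inr <| .inr <| .inr <| .inr <| .inr <| .inr <| .inr <| .inr <| .inr <|
      .inl ⟨l, h1, rfl⟩⟩

lemma h8_mem_spanB (s t : Fin n) (h : t < s) (hsi : s ≠ i) (hsj : s ≠ j) (hsk : s ≠ k)
    (hti : t ≠ i) (htj : t ≠ j) (htk : t ≠ k) : Xv n s t h • rGen n i j k hkj hji ∈ spanB n :=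
  Submodule.subset_span ⟨i, j, k, hkj, hji,
    .inr <| .inr <| .inr <| .inr <| .inr <| .inr <| .inr <| .inr <| .inr <| .inr <| .inr
      ⟨s, t, h, hsi, hsj, hsk, hti, htj, htk, rfl⟩⟩

end

lemma Xv_smul_rGen_mem_spanB {i j k u v : Fin n} (hkj : k < j) (hji : j < i) (hvu : v < u)
    (hui : u ≠ i) (huj : u ≠ j) (huk : u ≠ k) (hvi : v ≠ i) :
    Xv n u v hvu • rGen n i j k hkj hji ∈ spanB n := by
  by_cases hvj : v = j
  · subst hvj
    rcases lt_or_gt_of_ne hui with hu | hu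
    · exact h5_mem_spanB i v k u hkj hji hvu hu
    · exact h7_mem_spanB i v k u hkj hji hu
  by_cases hvk : v = k
  · subst hvk
    rcases lt_or_gt_of_ne huj with hu | hu
    · exact h3_mem_spanB i j v u hkj hji hvu hu
    rcases lt_or_gt_of_ne hui with hu' | hu'
    · exact h4_mem_spanB i j v u hkj hji hu hu'
    · exact h6_mem_spanB i j v u hkj hji hu'
  exact h8_mem_spanB i j k hkj hji u v hvu hui huj huk hvi hvj hvk

section

variable {i j k q : Fin n} (hqk : q < k) (hkj : k < j) (hji : j < i)

lemma Xv_smul_rGen_smodEq_jkq :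
    Xv n k q hqk • rGen n i j k hkj hji ≡ -Xv n i j hji • rGen n j k q hqk hkj [SMOD spanB n] := by
  rw [SModEq.sub_mem, neg_smul, sub_neg_eq_add]
  exact g4_mem_spanB j k q i hqk hkj hji

lemma Xv_smul_rGen_smodEq_ikq :
    Xv n k q hqk • rGen n i j k hkj hji ≡
      Xv n i j hji • rGen n i k q hqk (hkj.trans hji) [SMOD spanB n] := by
  rw [SModEq.sub_mem, ← neg_mem_iff]
  convert g3_mem_spanB i k q j hqk (hkj.trans hji) hkj hji using 1
  module

lemma Xv_smul_rGen_smodEq_ijq :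
    Xv n k q hqk • rGen n i j k hkj hji ≡
      (Xv n i k (hkj.trans hji) + Xv n j k hkj) • rGen n i j q (hqk.trans hkj) hji
      [SMOD spanB n] := by
  have h := add_mem (g1_mem_spanB i j q k (hqk.trans hkj) hji hqk hkj)
    (g2_mem_spanB i j q k (hqk.trans hkj) hji hqk hkj)
  rw [SModEq.sub_mem, ← neg_mem_iff]
  convert h using 1
  module

lemma X_smul_Xv_smul_rGen_mem_spanB (a : PIdx n) (ha : a.1 ≠ (i, j)) :
    (X a : Sn n) • Xv n k q hqk • rGen n i j k hkj hji ∈ spanB n := by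
  obtain ⟨⟨u, v⟩, hvu⟩ := a
  replace ha : (u, v) ≠ (i, j) := ha
  change Xv n u v hvu • _ ∈ _
  have hki := hkj.trans hji
  by_cases hui : u = i
  · subst hui
    have hvj : v ≠ j := fun h => ha (by rw [h])
    exact (Xv_smul_rGen_smodEq_jkq hqk hkj hji).smul_mem_of_smul_mem
      (Xv_smul_rGen_mem_spanB hqk hkj hvu hji.ne' hki.ne' (hqk.trans hki).ne' hvj)
  by_cases huj : u = j
  · subst huj
    exact (Xv_smul_rGen_smodEq_ikq hqk hkj hji).smul_mem_of_smul_mem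
      (Xv_smul_rGen_mem_spanB hqk hki hvu hui hkj.ne' (hqk.trans hkj).ne' (hvu.trans hji).ne)
  by_cases huk : u = k
  · subst huk
    exact (Xv_smul_rGen_smodEq_ijq hqk hkj hji).smul_mem_of_smul_mem
      (Xv_smul_rGen_mem_spanB (hqk.trans hkj) hji hvu hui huj hqk.ne' (hvu.trans hki).ne)
  by_cases hvi : v = i
  · subst hvi
    exact (Xv_smul_rGen_smodEq_jkq hqk hkj hji).smul_mem_of_smul_mem
      (Xv_smul_rGen_mem_spanB hqk hkj hvu (hji.trans hvu).ne' (hki.trans hvu).ne'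
        ((hqk.trans hki).trans hvu).ne' hji.ne')
  rw [smul_comm]
  exact Submodule.smul_mem _ _ (Xv_smul_rGen_mem_spanB hkj hji hvu hui huj huk hvi)

end

lemma smul_mem_spanB_of_mem_spanB' {g : Sn n} (hg : ∀ w ∈ ESet n, g • w ∈ spanB n) {w : Fn n}
    (hw : w ∈ spanB' n) : g • w ∈ spanB n := by
  induction hw using Submodule.span_induction with
  | mem x hx => exact hx.elim (fun hB => Submodule.smul_mem _ _ (Submodule.subset_span hB)) (hg x)
  | zero => simp
  | add x y _ _ hx hy => rw [smul_add]; exact add_mem hx hy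
  | smul c x _ hx => rw [smul_comm]; exact Submodule.smul_mem _ _ hx

lemma mul_mem_annihilator_Bn {g f : Sn n} (hg : ∀ w ∈ ESet n, g • w ∈ spanB n)
    (hf : f ∈ Module.annihilator (Sn n) (Bn' n)) : g * f ∈ Module.annihilator (Sn n) (Bn n) := by
  rw [Submodule.mem_annihilator_quotient_iff] at hf ⊢
  intro v
  rw [mul_smul]
  exact smul_mem_spanB_of_mem_spanB' hg (hf v)

lemma X_mul_X_mul_mem_annihilator_Bn {a b : PIdx n} (hab : a ≠ b) {f : Sn n}
    (hf : f ∈ Module.annihilator (Sn n) (Bn' n)) :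
    X a * X b * f ∈ Module.annihilator (Sn n) (Bn n) := by
  refine mul_mem_annihilator_Bn ?_ hf
  rintro _ ⟨i, j, k, hkj, hji, q, hqk, rfl⟩
  by_cases ha : a.1 = (i, j)
  · have hb : b.1 ≠ (i, j) := fun hb => hab (Subtype.ext (ha.trans hb.symm))
    rw [mul_smul]
    exact Submodule.smul_mem _ _ (X_smul_Xv_smul_rGen_mem_spanB hqk hkj hji b hb)
  · rw [mul_comm, mul_smul]
    exact Submodule.smul_mem _ _ (X_smul_Xv_smul_rGen_mem_spanB hqk hkj hji a ha)

lemma X_mul_mem_annihilator_Bn {a : PIdx n} (ha : (a.1.2 : ℕ) = 0) {f : Sn n}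
    (hf : f ∈ Module.annihilator (Sn n) (Bn' n)) : X a * f ∈ Module.annihilator (Sn n) (Bn n) := by
  refine mul_mem_annihilator_Bn ?_ hf
  rintro _ ⟨i, j, k, hkj, hji, q, hqk, rfl⟩
  refine X_smul_Xv_smul_rGen_mem_spanB hqk hkj hji a fun h => ?_
  have : (a.1.2 : ℕ) = j := by rw [h]
  omega

lemma annihilator_Bn_le_annihilator_Bn' :
    Module.annihilator (Sn n) (Bn n) ≤ Module.annihilator (Sn n) (Bn' n) := by
  intro f hf
  rw [Submodule.mem_annihilator_quotient_iff] at hf ⊢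
  exact fun v => Submodule.span_mono Set.subset_union_left (hf v)

lemma eval_single_apply_eq_zero_of_mem_spanB' {s t z : Fin n} (hzt : z < t) (hts : t < s)
    (hz : IsBot z) (c : ℂ) {w : Fn n} (hw : w ∈ spanB' n) :
    eval (Pi.single ⟨(s, t), hts⟩ c) (w ⟨(s, t, z), hzt, hts⟩) = 0 := by
  suffices spanB' n ≤ Submodule.comap (LinearMap.proj ⟨(s, t, z), hzt, hts⟩)
      (RingHom.ker (eval (Pi.single (⟨(s, t), hts⟩ : PIdx n) c))) from this hw
  refine Submodule.span_le.2 fun w hw => ?_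
  -- Each `r_{stz}`-coefficient of a generator is a sum of variables other than `x_{st}`, or
  -- would need an index below the minimal `z`.
  have hz' : ∀ c, ¬ c < z := fun c => (hz c).not_gt
  rcases hw with ⟨i, j, k, hkj, hji, hc⟩ | ⟨i, j, k, hkj, hji, q, hq, rfl⟩
  · rcases hc with ⟨l, h1, h2, rfl⟩ | ⟨l, h1, h2, rfl⟩ | ⟨l, h1, h2, rfl⟩ | ⟨l, h1, rfl⟩ |
      ⟨l, h1, rfl⟩ | rfl | ⟨l, h1, h2, rfl⟩ | ⟨l, h1, h2, rfl⟩ | ⟨l, h1, h2, rfl⟩ |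
      ⟨l, h1, rfl⟩ | ⟨l, h1, rfl⟩ | ⟨u, v, h, hs1, hs2, hs3, ht1, ht2, ht3, rfl⟩ <;>
    simp only [SetLike.mem_coe, Submodule.mem_comap, LinearMap.proj_apply, RingHom.mem_ker,
      rGen, Pi.add_apply, Pi.neg_apply, Pi.smul_apply, Pi.single_apply, smul_eq_mul,
      mul_ite, mul_one, mul_zero] <;>
    split_ifs <;> simp_all [Xv, Pi.single_apply] <;> grind
  · simp only [SetLike.mem_coe, Submodule.mem_comap, LinearMap.proj_apply, RingHom.mem_ker,
      rGen, Pi.smul_apply, Pi.single_apply, smul_eq_mul, mul_ite, mul_one, mul_zero]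
    split_ifs <;> simp_all [Xv, Pi.single_apply]
    grind

lemma eval_single_eq_zero_of_mem_annihilator_Bn' {s t z : Fin n} (hzt : z < t) (hts : t < s)
    (hz : IsBot z) (c : ℂ) {f : Sn n} (hf : f ∈ Module.annihilator (Sn n) (Bn' n)) :
    eval (Pi.single ⟨(s, t), hts⟩ c) f = 0 := by
  simpa [rGen] using eval_single_apply_eq_zero_of_mem_spanB' hzt hts hz c
    (Submodule.mem_annihilator_quotient_iff.1 hf (rGen n s t z hzt hts))

lemma mem_zeroLocus_annihilator_Bn' (hn : 3 ≤ n) {p : PIdx n → ℂ}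
    (hpair : ∀ a b, a ≠ b → p a * p b = 0) (hlow : ∀ a, p a ≠ 0 → (a.1.2 : ℕ) ≠ 0) :
    p ∈ zeroLocus n (Module.annihilator (Sn n) (Bn' n)) := by
  obtain ⟨⟨⟨s, t⟩, hts⟩, ht, hp⟩ : ∃ a : PIdx n, (a.1.2 : ℕ) ≠ 0 ∧ p = Pi.single a (p a) := by
    by_cases h : ∃ a, p a ≠ 0
    · obtain ⟨a, ha⟩ := h
      refine ⟨a, hlow a ha, funext fun b => ?_⟩
      rcases eq_or_ne b a with rfl | hb
      · simp
      · simpa [hb, ha] using hpair b a hb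
    · push Not at h
      exact ⟨⟨(⟨2, by omega⟩, ⟨1, by omega⟩), by simp [Fin.lt_def]⟩, one_ne_zero,
        funext fun b => by simp [h]⟩
  intro f hf
  rw [hp]
  exact eval_single_eq_zero_of_mem_annihilator_Bn' (z := ⟨0, by omega⟩)
    (Fin.lt_def.2 (Nat.pos_of_ne_zero ht)) hts (fun _ => Nat.zero_le _) _ hf

lemma X_smul_single_mem_spanJ (a : PIdx n) (Q : QIdx n) (ha : a.1 ≠ (Q.1.1, Q.1.2.1)) :
    (X a : Sn n) • (Pi.single Q 1 : F'n n) ∈ spanJ n := by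
  obtain ⟨⟨u, v⟩, hvu⟩ := a
  obtain ⟨⟨i, j, k, l⟩, h1, h2, h3⟩ := Q
  exact Submodule.subset_span ⟨i, j, k, l, h1, h2, h3, u, v, hvu, ha, rfl⟩

lemma X_mul_X_mem_annihilator_Kn {a b : PIdx n} (hab : a ≠ b) :
    X a * X b ∈ Module.annihilator (Sn n) (Kn n) := by
  rw [(Pi.basisFun (Sn n) (QIdx n)).mem_annihilator_quotient_iff]
  intro Q
  rw [Pi.basisFun_apply]
  by_cases ha : a.1 = (Q.1.1, Q.1.2.1)
  · have hb : b.1 ≠ (Q.1.1, Q.1.2.1) := fun hb => hab (Subtype.ext (ha.trans hb.symm))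
    rw [mul_smul]
    exact Submodule.smul_mem _ _ (X_smul_single_mem_spanJ b Q hb)
  · rw [mul_comm, mul_smul]
    exact Submodule.smul_mem _ _ (X_smul_single_mem_spanJ a Q ha)

lemma X_mem_annihilator_Kn {a : PIdx n} (ha : (a.1.2 : ℕ) < 2) :
    X a ∈ Module.annihilator (Sn n) (Kn n) := by
  rw [(Pi.basisFun (Sn n) (QIdx n)).mem_annihilator_quotient_iff]
  rintro ⟨⟨i, j, k, l⟩, hlk, hkj, hji⟩
  rw [Pi.basisFun_apply]
  refine X_smul_single_mem_spanJ a _ fun h => ?_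
  have : (a.1.2 : ℕ) = j := by rw [h]
  simp only [Fin.lt_def] at hlk hkj
  omega

/-- For `n ≥ 4`, the zero loci of the annihilator ideals satisfy
`Z(Ann(Kₙ)) ⊆ Z(Ann(𝔅ₙ)) = Z(Ann(𝔅ₙ'))`. -/
theorem zeroLocus_annihilators (n : ℕ) (hn : 4 ≤ n) :
    zeroLocus n (Module.annihilator (Sn n) (Kn n)) ⊆
      zeroLocus n (Module.annihilator (Sn n) (Bn n)) ∧
    zeroLocus n (Module.annihilator (Sn n) (Bn n)) =
      zeroLocus n (Module.annihilator (Sn n) (Bn' n)) := by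
  refine ⟨fun p hp => ?_, le_antisymm (fun p hp f hf => ?_)
    (zeroLocus_anti_mono annihilator_Bn_le_annihilator_Bn')⟩
  · refine zeroLocus_anti_mono annihilator_Bn_le_annihilator_Bn'
      (mem_zeroLocus_annihilator_Bn' (by omega) (fun a b hab => ?_) fun a ha h0 => ha ?_)
    · simpa using hp _ (X_mul_X_mem_annihilator_Kn hab)
    · simpa using hp _ (X_mem_annihilator_Kn (a := a) (by omega))
  · by_contra hfp
    refine hfp (mem_zeroLocus_annihilator_Bn' (by omega) (fun a b hab => ?_)
      (fun a ha h0 => ha ?_) f hf)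
    · simpa [hfp] using hp _ (X_mul_X_mul_mem_annihilator_Bn hab hf)
    · simpa [hfp] using hp _ (X_mul_mem_annihilator_Bn h0 hf)
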